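/- Let p ≥ 1 be an integer and λ ∈ [0,1]. Consider the set S of coefficient pairs (a,b) satisfying a_{1,1} = 1, b_{1,1} = 0, a_{1,k} = b_{1,k} = 0 for 2 ≤ k ≤ p, and Σ_{k=1}^p Σ_{n=2}^∞ (2(k−1) + n(λn + 1 − λ))(|a_{n,k}| + |b_{n,k}|) ≤ 1 (the coefficient set of the class HS_p^0(λ)). Then for every n ≥ 2, every k ∈ {1,…,p}, and every complex c with |c| = 1/(2(k−1) + n(λn + 1 − λ)), the coefficient pair with a_{1,1} = 1 and a_{n,k} = c and all other coefficients zero is an extreme point of S; likewise the coefficient pair with a_{1,1} = 1 and b_{n,k} = c and all other coefficients zero is an extreme point of S. -/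

import Mathlib

open Complex Metric Set

/-! Let `w` be the weight of `(n, k)`, so `w ‖c‖ = 1`. For the point `x` with single coefficient
`c` at `(n, k)`, the `(n, k)` term alone exhausts the budget `1`; hence every other (nonnegative)
term of a point of `ES` agreeing with `x` at `(n, k)` vanishes, and that point is `x`. So `x` is
extreme once its coefficient pair at `(n, k)` is extreme in the image of `ES`, which lies in the
`ℓ¹`-ball of radius `‖c‖`. The pairs `(c, 0)` and `(0, c)` are extreme there because `c` is an
extreme point of the closed ball of the strictly convex space `ℂ`. -/

/-- The coefficient set of the class `HS_p^0(λ)`: pairs `(a, b)` of coefficient arrays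
(`x.1 n k = a_{n,k}`, `x.2 n k = b_{n,k}`, supported on `1 ≤ n`, `1 ≤ k ≤ p`) with
`a_{1,1} = 1`, `b_{1,1} = 0`, `a_{1,k} = b_{1,k} = 0` for `2 ≤ k ≤ p` and
`Σ_{k=1}^p Σ_{n=2}^∞ (2(k−1) + n(λn+1−λ))(|a_{n,k}| + |b_{n,k}|) ≤ 1`. -/
def ES (p : ℕ) (lam : ℝ) : Set ((ℕ → ℕ → ℂ) × (ℕ → ℕ → ℂ)) :=
  {x | x.1 1 1 = 1 ∧ x.2 1 1 = 0 ∧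
    (∀ k, 2 ≤ k → k ≤ p → x.1 1 k = 0 ∧ x.2 1 k = 0) ∧
    (∀ n k, n = 0 ∨ k = 0 ∨ p < k → x.1 n k = 0 ∧ x.2 n k = 0) ∧
    (∀ k ∈ Finset.Icc 1 p, Summable (fun n : ℕ =>
      if 2 ≤ n then (2 * ((k : ℝ) - 1) + n * (lam * n + 1 - lam)) *
        (‖x.1 n k‖ + ‖x.2 n k‖) else 0)) ∧
    ∑ k ∈ Finset.Icc 1 p, ∑' n : ℕ,
      (if 2 ≤ n then (2 * ((k : ℝ) - 1) + n * (lam * n + 1 - lam)) *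
        (‖x.1 n k‖ + ‖x.2 n k‖) else 0) ≤ 1}

section Extreme

variable {𝕜 E F : Type*} [Ring 𝕜] [PartialOrder 𝕜] [AddCommGroup E] [Module 𝕜 E]
  [AddCommGroup F] [Module 𝕜 F]

theorem mem_extremePoints_of_map_mem_extremePoints (f : E →ₗ[𝕜] F) {A : Set E} {B : Set F}
    {x : E} (hx : x ∈ A) (hAB : MapsTo f A B) (hfx : f x ∈ extremePoints 𝕜 B)
    (hfiber : ∀ y ∈ A, f y = f x → y = x) : x ∈ extremePoints 𝕜 A := by
  refine mem_extremePoints_iff_left.2 ⟨hx, fun y hy z hz hxyz ↦ hfiber y hy ?_⟩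
  obtain ⟨a, b, ha, hb, hab, rfl⟩ := hxyz
  exact mem_extremePoints_iff_left.1 hfx |>.2 _ (hAB hy) _ (hAB hz)
    ⟨a, b, ha, hb, hab, by rw [map_add, map_smul, map_smul]⟩

end Extreme

section L1Ball

variable {E F : Type*} [NormedAddCommGroup E] [NormedSpace ℝ E] [NormedAddCommGroup F]
  [NormedSpace ℝ F]

theorem mk_zero_mem_extremePoints_setOf_norm_add_norm_le [StrictConvexSpace ℝ E] {c : E}
    (hc : c ≠ 0) : (c, (0 : F)) ∈ extremePoints ℝ {u : E × F | ‖u.1‖ + ‖u.2‖ ≤ ‖c‖} := by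
  refine mem_extremePoints_of_map_mem_extremePoints (LinearMap.fst ℝ E F) (by simp)
    (fun u (hu : ‖u.1‖ + ‖u.2‖ ≤ ‖c‖) ↦ mem_closedBall_zero_iff.2 ?_)
    (StrictConvexSpace.sphere_subset_extremePoints_closedBall 0 (norm_ne_zero_iff.2 hc)
      (by simp)) fun u (hu : ‖u.1‖ + ‖u.2‖ ≤ ‖c‖) (hu1 : u.1 = c) ↦ ?_
  · change ‖u.1‖ ≤ ‖c‖
    linarith [norm_nonneg u.2]
  · rw [hu1] at hu
    exact Prod.ext hu1 (norm_le_zero_iff.1 (by linarith))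

theorem zero_mk_mem_extremePoints_setOf_norm_add_norm_le [StrictConvexSpace ℝ F] {c : F}
    (hc : c ≠ 0) : ((0 : E), c) ∈ extremePoints ℝ {u : E × F | ‖u.1‖ + ‖u.2‖ ≤ ‖c‖} := by
  refine mem_extremePoints_of_map_mem_extremePoints (LinearMap.snd ℝ E F) (by simp)
    (fun u (hu : ‖u.1‖ + ‖u.2‖ ≤ ‖c‖) ↦ mem_closedBall_zero_iff.2 ?_)
    (StrictConvexSpace.sphere_subset_extremePoints_closedBall 0 (norm_ne_zero_iff.2 hc)
      (by simp)) fun u (hu : ‖u.1‖ + ‖u.2‖ ≤ ‖c‖) (hu2 : u.2 = c) ↦ ?_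
  · change ‖u.2‖ ≤ ‖c‖
    linarith [norm_nonneg u.1]
  · rw [hu2] at hu
    exact Prod.ext (norm_le_zero_iff.1 (by linarith)) hu2

end L1Ball

section DoubleSum

variable {ι β : Type*} {s : Finset ι} {f : ι → β → ℝ}

theorem le_sum_tsum_of_nonneg (hf : ∀ j ∈ s, ∀ m, 0 ≤ f j m) (hs : ∀ j ∈ s, Summable (f j))
    {k : ι} (hk : k ∈ s) (n : β) : f k n ≤ ∑ i ∈ s, ∑' b, f i b :=
  ((hs k hk).le_tsum n fun m _ ↦ hf k hk m).trans
    (Finset.single_le_sum (fun j hj ↦ tsum_nonneg (hf j hj)) hk)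

theorem add_le_sum_tsum_of_nonneg (hf : ∀ j ∈ s, ∀ m, 0 ≤ f j m)
    (hs : ∀ j ∈ s, Summable (f j)) {k j : ι} (hk : k ∈ s) (hj : j ∈ s) {n m : β}
    (hjm : (j, m) ≠ (k, n)) : f k n + f j m ≤ ∑ i ∈ s, ∑' b, f i b := by
  classical
  by_cases hjk : j = k
  · subst hjk
    have hmn : n ≠ m := fun h ↦ hjm (by rw [h])
    calc f j n + f j m = ∑ i ∈ {n, m}, f j i := (Finset.sum_pair hmn).symm
      _ ≤ ∑' i, f j i := (hs j hj).sum_le_tsum _ fun i _ ↦ hf j hj i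
      _ ≤ ∑ i ∈ s, ∑' b, f i b := Finset.single_le_sum (fun i hi ↦ tsum_nonneg (hf i hi)) hj
  · calc f k n + f j m ≤ ∑' i, f k i + ∑' i, f j i :=
          add_le_add ((hs k hk).le_tsum n fun i _ ↦ hf k hk i)
            ((hs j hj).le_tsum m fun i _ ↦ hf j hj i)
      _ = ∑ i ∈ {k, j}, ∑' b, f i b :=
          (Finset.sum_pair (f := fun i ↦ ∑' b, f i b) (Ne.symm hjk)).symm
      _ ≤ ∑ i ∈ s, ∑' b, f i b :=
          Finset.sum_le_sum_of_subset_of_nonneg (Finset.insert_subset hk (by simpa))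
            fun i hi _ ↦ tsum_nonneg (hf i hi)

theorem eq_zero_of_sum_tsum_le_of_nonneg (hf : ∀ j ∈ s, ∀ m, 0 ≤ f j m)
    (hs : ∀ j ∈ s, Summable (f j)) {k : ι} (hk : k ∈ s) {n : β}
    (hle : ∑ i ∈ s, ∑' b, f i b ≤ f k n) {j : ι} (hj : j ∈ s) {m : β}
    (hjm : (j, m) ≠ (k, n)) : f j m = 0 :=
  le_antisymm (by linarith [add_le_sum_tsum_of_nonneg hf hs hk hj hjm]) (hf j hj m)

end DoubleSum

noncomputable def weight (lam : ℝ) (m j : ℕ) : ℝ := 2 * ((j : ℝ) - 1) + m * (lam * m + 1 - lam)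

/-- The arguments are in the order `j m` so that `weightedTerm lam x j` is an inner series of
`ES`. -/
noncomputable def weightedTerm (lam : ℝ) (x : (ℕ → ℕ → ℂ) × (ℕ → ℕ → ℂ)) (j m : ℕ) : ℝ :=
  if 2 ≤ m then weight lam m j * (‖x.1 m j‖ + ‖x.2 m j‖) else 0

def singleCoeff (n k : ℕ) (α β : ℂ) : (ℕ → ℕ → ℂ) × (ℕ → ℕ → ℂ) :=
  (fun m j ↦ if m = 1 ∧ j = 1 then 1 else if m = n ∧ j = k then α else 0,
    fun m j ↦ if m = n ∧ j = k then β else 0)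

@[simp]
theorem singleCoeff_fst_apply (n k : ℕ) (α β : ℂ) (m j : ℕ) :
    (singleCoeff n k α β).1 m j = if m = 1 ∧ j = 1 then 1 else if m = n ∧ j = k then α else 0 :=
  rfl

@[simp]
theorem singleCoeff_snd_apply (n k : ℕ) (α β : ℂ) (m j : ℕ) :
    (singleCoeff n k α β).2 m j = if m = n ∧ j = k then β else 0 :=
  rfl

def coeffAt (n k : ℕ) : ((ℕ → ℕ → ℂ) × (ℕ → ℕ → ℂ)) →ₗ[ℝ] ℂ × ℂ where
  toFun x := (x.1 n k, x.2 n k)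
  map_add' _ _ := rfl
  map_smul' _ _ := rfl

section ES

variable {p : ℕ} {lam : ℝ} {x y : (ℕ → ℕ → ℂ) × (ℕ → ℕ → ℂ)}

theorem mem_ES_iff : x ∈ ES p lam ↔ x.1 1 1 = 1 ∧ x.2 1 1 = 0 ∧
    (∀ k, 2 ≤ k → k ≤ p → x.1 1 k = 0 ∧ x.2 1 k = 0) ∧
    (∀ n k, n = 0 ∨ k = 0 ∨ p < k → x.1 n k = 0 ∧ x.2 n k = 0) ∧
    (∀ k ∈ Finset.Icc 1 p, Summable (weightedTerm lam x k)) ∧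
    ∑ k ∈ Finset.Icc 1 p, ∑' n, weightedTerm lam x k n ≤ 1 :=
  Iff.rfl

theorem weight_pos (hlam : 0 ≤ lam) {m j : ℕ} (hm : 2 ≤ m) (hj : 1 ≤ j) :
    0 < weight lam m j := by
  have hm' : (2 : ℝ) ≤ m := by exact_mod_cast hm
  have hj' : (1 : ℝ) ≤ j := by exact_mod_cast hj
  have : 0 ≤ lam * m * (m - 1) := mul_nonneg (by positivity) (by linarith)
  unfold weight
  nlinarith

theorem weightedTerm_nonneg (hlam : 0 ≤ lam) {j : ℕ} (hj : 1 ≤ j)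
    (x : (ℕ → ℕ → ℂ) × (ℕ → ℕ → ℂ)) (m : ℕ) :
    0 ≤ weightedTerm lam x j m := by
  unfold weightedTerm
  split_ifs with hm
  · exact mul_nonneg (weight_pos hlam hm hj).le (by positivity)
  · exact le_rfl

theorem weightedTerm_eq_zero_iff (hlam : 0 ≤ lam) {m j : ℕ} (hm : 2 ≤ m) (hj : 1 ≤ j) :
    weightedTerm lam x j m = 0 ↔ x.1 m j = 0 ∧ x.2 m j = 0 := by
  rw [weightedTerm, if_pos hm, mul_eq_zero, or_iff_right (weight_pos hlam hm hj).ne',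
    add_eq_zero_iff_of_nonneg (norm_nonneg _) (norm_nonneg _), norm_eq_zero, norm_eq_zero]

theorem weightedTerm_le_one (hlam : 0 ≤ lam) (hx : x ∈ ES p lam) {k : ℕ}
    (hk : k ∈ Finset.Icc 1 p) (n : ℕ) : weightedTerm lam x k n ≤ 1 := by
  obtain ⟨-, -, -, -, hsum, hle⟩ := mem_ES_iff.1 hx
  exact (le_sum_tsum_of_nonneg (fun _ hj ↦ weightedTerm_nonneg hlam (Finset.mem_Icc.1 hj).1 x)
    hsum hk n).trans hle

theorem coeff_eq_zero_of_weightedTerm_eq_one (hlam : 0 ≤ lam) (hx : x ∈ ES p lam) {n k : ℕ}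
    (hk : k ∈ Finset.Icc 1 p) (hx1 : weightedTerm lam x k n = 1) {m j : ℕ} (hm : 2 ≤ m)
    (hj : j ∈ Finset.Icc 1 p) (hjm : (j, m) ≠ (k, n)) : x.1 m j = 0 ∧ x.2 m j = 0 := by
  obtain ⟨-, -, -, -, hsum, hle⟩ := mem_ES_iff.1 hx
  exact (weightedTerm_eq_zero_iff hlam hm (Finset.mem_Icc.1 hj).1).1 <|
    eq_zero_of_sum_tsum_le_of_nonneg
      (fun _ hi ↦ weightedTerm_nonneg hlam (Finset.mem_Icc.1 hi).1 x) hsum hk (hx1 ▸ hle) hj hjm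

/-- Membership in `ES` fixes every coefficient outside `2 ≤ m`, `1 ≤ j ≤ p`. -/
theorem eq_of_mem_ES_of_coeff_eq (hx : x ∈ ES p lam) (hy : y ∈ ES p lam)
    (h : ∀ m, 2 ≤ m → ∀ j ∈ Finset.Icc 1 p, x.1 m j = y.1 m j ∧ x.2 m j = y.2 m j) :
    x = y := by
  obtain ⟨hx11, hx12, hx1, hx0, -⟩ := hx
  obtain ⟨hy11, hy12, hy1, hy0, -⟩ := hy
  suffices ∀ m j, x.1 m j = y.1 m j ∧ x.2 m j = y.2 m j from
    Prod.ext (funext₂ fun m j ↦ (this m j).1) (funext₂ fun m j ↦ (this m j).2)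
  intro m j
  by_cases hout : m = 0 ∨ j = 0 ∨ p < j
  · rw [(hx0 m j hout).1, (hx0 m j hout).2, (hy0 m j hout).1, (hy0 m j hout).2]
    exact ⟨rfl, rfl⟩
  rcases (by omega : (m = 1 ∧ j = 1) ∨ (m = 1 ∧ 2 ≤ j ∧ j ≤ p) ∨ (2 ≤ m ∧ 1 ≤ j ∧ j ≤ p))
    with ⟨rfl, rfl⟩ | ⟨rfl, hj2, hjp⟩ | ⟨hm, hj1, hjp⟩
  · exact ⟨hx11.trans hy11.symm, hx12.trans hy12.symm⟩
  · rw [(hx1 j hj2 hjp).1, (hx1 j hj2 hjp).2, (hy1 j hj2 hjp).1, (hy1 j hj2 hjp).2]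
    exact ⟨rfl, rfl⟩
  · exact h m hm j (Finset.mem_Icc.2 ⟨hj1, hjp⟩)

theorem eq_of_mem_ES_of_coeffAt_eq (hlam : 0 ≤ lam) (hx : x ∈ ES p lam) (hy : y ∈ ES p lam)
    {n k : ℕ} (hk : k ∈ Finset.Icc 1 p) (hy1 : weightedTerm lam y k n = 1)
    (hxy : coeffAt n k x = coeffAt n k y) : x = y := by
  have hxy1 : x.1 n k = y.1 n k := congrArg Prod.fst hxy
  have hxy2 : x.2 n k = y.2 n k := congrArg Prod.snd hxy
  have hx1 : weightedTerm lam x k n = 1 := by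
    rw [← hy1]
    simp only [weightedTerm, hxy1, hxy2]
  refine eq_of_mem_ES_of_coeff_eq hx hy fun m hm j hj ↦ ?_
  by_cases hjm : (j, m) = (k, n)
  · obtain ⟨rfl, rfl⟩ := Prod.ext_iff.1 hjm
    exact ⟨hxy1, hxy2⟩
  · obtain ⟨hx1', hx2'⟩ := coeff_eq_zero_of_weightedTerm_eq_one hlam hx hk hx1 hm hj hjm
    obtain ⟨hy1', hy2'⟩ := coeff_eq_zero_of_weightedTerm_eq_one hlam hy hk hy1 hm hj hjm
    exact ⟨hx1'.trans hy1'.symm, hx2'.trans hy2'.symm⟩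

theorem mem_extremePoints_ES (hlam : 0 ≤ lam) {n k : ℕ} (hn : 2 ≤ n)
    (hk : k ∈ Finset.Icc 1 p) {r : ℝ} (hr : weight lam n k * r = 1) (hx : x ∈ ES p lam)
    (hx1 : weightedTerm lam x k n = 1)
    (hext : coeffAt n k x ∈ extremePoints ℝ {u : ℂ × ℂ | ‖u.1‖ + ‖u.2‖ ≤ r}) :
    x ∈ extremePoints ℝ (ES p lam) := by
  refine mem_extremePoints_of_map_mem_extremePoints (coeffAt n k) hx (fun y hy ↦ ?_) hext
    fun y hy hyx ↦ eq_of_mem_ES_of_coeffAt_eq hlam hy hx hk hx1 hyx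
  have hW := weight_pos hlam hn (Finset.mem_Icc.1 hk).1
  have hy1 := weightedTerm_le_one hlam hy hk n
  rw [weightedTerm, if_pos hn, ← hr] at hy1
  exact le_of_mul_le_mul_left hy1 hW

theorem weightedTerm_singleCoeff {n k : ℕ} (hn : 2 ≤ n) (α β : ℂ) (j m : ℕ) :
    weightedTerm lam (singleCoeff n k α β) j m =
      if m = n ∧ j = k then weight lam n k * (‖α‖ + ‖β‖) else 0 := by
  by_cases hmj : m = n ∧ j = k
  · obtain ⟨rfl, rfl⟩ := hmj
    simp [weightedTerm, hn, show m ≠ 1 by omega]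
  · rw [if_neg hmj, weightedTerm]
    split_ifs with hm
    · simp [hmj, show m ≠ 1 by omega]
    · rfl

theorem singleCoeff_mem_ES {n k : ℕ} (hn : 2 ≤ n) (hk : k ∈ Finset.Icc 1 p) {α β : ℂ}
    (h : weight lam n k * (‖α‖ + ‖β‖) ≤ 1) : singleCoeff n k α β ∈ ES p lam := by
  have hterm := weightedTerm_singleCoeff (lam := lam) (k := k) hn α β
  obtain ⟨hk1, hkp⟩ := Finset.mem_Icc.1 hk
  have hzero : ∀ m j, ¬(m = 1 ∧ j = 1) → ¬(m = n ∧ j = k) →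
      (singleCoeff n k α β).1 m j = 0 ∧ (singleCoeff n k α β).2 m j = 0 := fun m j h11 hnk ↦
    ⟨by rw [singleCoeff_fst_apply, if_neg h11, if_neg hnk],
      by rw [singleCoeff_snd_apply, if_neg hnk]⟩
  refine mem_ES_iff.2 ⟨by rw [singleCoeff_fst_apply, if_pos ⟨rfl, rfl⟩],
    by rw [singleCoeff_snd_apply, if_neg (by omega)],
    fun j hj2 _ ↦ hzero 1 j (by omega) (by omega), fun m j hmj ↦ hzero m j (by omega) (by omega),
    fun j _ ↦ ?_, ?_⟩
  · refine summable_of_ne_finset_zero (s := {n}) fun m hm ↦ ?_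
    rw [hterm, if_neg fun h ↦ hm (Finset.mem_singleton.2 h.1)]
  · simp only [hterm, ite_and, tsum_ite_eq, Finset.sum_ite_eq', if_pos hk, h]

theorem coeffAt_singleCoeff {n k : ℕ} (hn : 2 ≤ n) (α β : ℂ) :
    coeffAt n k (singleCoeff n k α β) = (α, β) := by
  simp [coeffAt, singleCoeff, show n ≠ 1 by omega]

end ES

theorem single_coefficient_maps_are_extreme_general
    (p : ℕ) (lam : ℝ) (hlam : lam ∈ Set.Icc (0 : ℝ) 1)
    (n k : ℕ) (hn : 2 ≤ n) (hk1 : 1 ≤ k) (hkp : k ≤ p) (c : ℂ)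
    (hc : ‖c‖ = 1 / (2 * ((k : ℝ) - 1) + n * (lam * n + 1 - lam))) :
    ((fun m j => if m = 1 ∧ j = 1 then (1 : ℂ) else if m = n ∧ j = k then c else 0,
        fun _ _ => (0 : ℂ)) : (ℕ → ℕ → ℂ) × (ℕ → ℕ → ℂ))
      ∈ Set.extremePoints ℝ (ES p lam) ∧
    ((fun m j => if m = 1 ∧ j = 1 then (1 : ℂ) else 0,
        fun m j => if m = n ∧ j = k then c else 0) : (ℕ → ℕ → ℂ) × (ℕ → ℕ → ℂ))
      ∈ Set.extremePoints ℝ (ES p lam) := by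
  obtain ⟨hlam0, -⟩ := hlam
  have hk : k ∈ Finset.Icc 1 p := Finset.mem_Icc.2 ⟨hk1, hkp⟩
  have hr : weight lam n k * ‖c‖ = 1 := by
    rw [hc]
    exact mul_one_div_cancel (weight_pos hlam0 hn hk1).ne'
  have hc0 : c ≠ 0 := by
    rintro rfl
    simp at hr
  have hextreme : ∀ α β : ℂ, ‖α‖ + ‖β‖ = ‖c‖ →
      (α, β) ∈ extremePoints ℝ {u : ℂ × ℂ | ‖u.1‖ + ‖u.2‖ ≤ ‖c‖} →
      singleCoeff n k α β ∈ extremePoints ℝ (ES p lam) := fun α β hαβ hext ↦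
    mem_extremePoints_ES hlam0 hn hk hr (singleCoeff_mem_ES hn hk (by rw [hαβ, hr]))
      (by rw [weightedTerm_singleCoeff hn, if_pos ⟨rfl, rfl⟩, hαβ, hr])
      (by rwa [coeffAt_singleCoeff hn])
  constructor
  · simpa only [singleCoeff, ite_self] using
      hextreme c 0 (by simp) (mk_zero_mem_extremePoints_setOf_norm_add_norm_le hc0)
  · simpa only [singleCoeff, ite_self] using
      hextreme 0 c (by simp) (zero_mk_mem_extremePoints_setOf_norm_add_norm_le hc0)

/-- Each coefficient pair with `a_{1,1} = 1` and a single further nonzero coefficient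
`a_{n,k}` (resp. `b_{n,k}`), `n ≥ 2`, `1 ≤ k ≤ p`, of modulus
`1/(2(k−1) + n(λn+1−λ))`, is an extreme point of the coefficient set of `HS_p^0(λ)`. -/
theorem single_coefficient_maps_are_extreme
    (p : ℕ) (hp : 1 ≤ p) (lam : ℝ) (hlam : lam ∈ Set.Icc (0 : ℝ) 1)
    (n k : ℕ) (hn : 2 ≤ n) (hk1 : 1 ≤ k) (hkp : k ≤ p) (c : ℂ)
    (hc : ‖c‖ = 1 / (2 * ((k : ℝ) - 1) + n * (lam * n + 1 - lam))) :
    ((fun m j => if m = 1 ∧ j = 1 then (1 : ℂ) else if m = n ∧ j = k then c else 0,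
        fun _ _ => (0 : ℂ)) : (ℕ → ℕ → ℂ) × (ℕ → ℕ → ℂ))
      ∈ Set.extremePoints ℝ (ES p lam) ∧
    ((fun m j => if m = 1 ∧ j = 1 then (1 : ℂ) else 0,
        fun m j => if m = n ∧ j = k then c else 0) : (ℕ → ℕ → ℂ) × (ℕ → ℕ → ℂ))
      ∈ Set.extremePoints ℝ (ES p lam) :=
  single_coefficient_maps_are_extreme_general p lam hlam n k hn hk1 hkp c hc
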